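/- For every unweighted instance F of a Min-CSP Λ and every ε > 0, there exists a regular unweighted instance G of the same Min-CSP Λ such that: (a) Opt(F) ≥ Opt(G), and (b) for every assignment ζ to the variables of G there exists an assignment χ to the variables of F with Val_χ(F) ≤ Val_ζ(G) + ε. -/

import Mathlib

open Finset

/-- An instance of a CSP over domain `Fin q` with `n` variables: a finite list of
constraints, each a predicate applied to a scope of distinct variables, with
nonnegative weights summing to `1`. -/
structure CSPInstance (q n : ℕ) where
  m : ℕ
  ar : Fin m → ℕ
  pred : (r : Fin m) → ((Fin (ar r) → Fin q) → Bool)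
  scope : (r : Fin m) → Fin (ar r) → Fin n
  scope_inj : ∀ r, Function.Injective (scope r)
  w : Fin m → ℝ
  w_nonneg : ∀ r, 0 ≤ w r
  w_sum : ∑ r, w r = 1

namespace CSPInstance

variable {q n : ℕ}

/-- The value of an assignment: the total weight of satisfied constraints. -/
noncomputable def val (F : CSPInstance q n) (χ : Fin n → Fin q) : ℝ :=
  ∑ r, F.w r * (if F.pred r (fun i => χ (F.scope r i)) then 1 else 0)

/-- The optimum of a Max-CSP instance. -/
noncomputable def optMax (F : CSPInstance q n) : ℝ :=
  ⨆ χ : Fin n → Fin q, F.val χ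

/-- The optimum of a Min-CSP instance. -/
noncomputable def optMin (F : CSPInstance q n) : ℝ :=
  ⨅ χ : Fin n → Fin q, F.val χ

/-- An instance is unweighted if all constraints have weight `1/m`. -/
def Unweighted (F : CSPInstance q n) : Prop :=
  ∀ r, F.w r = 1 / F.m

/-- The degree of a variable: the number of constraints whose scope contains it. -/
noncomputable def degree (F : CSPInstance q n) (i : Fin n) : ℕ :=
  (Finset.univ.filter (fun r => ∃ j, F.scope r j = i)).card

/-- An instance is regular if all variables have the same degree. -/
def Regular (F : CSPInstance q n) : Prop :=
  ∃ d, ∀ i, F.degree i = d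

/-- `F` is an instance of the CSP `Λ`, viewed as a collection of predicates
(with their arities). -/
def InstanceOf (F : CSPInstance q n)
    (Λ : Set ((k : ℕ) × ((Fin k → Fin q) → Bool))) : Prop :=
  ∀ r, (⟨F.ar r, F.pred r⟩ : (k : ℕ) × ((Fin k → Fin q) → Bool)) ∈ Λ

end CSPInstance

/-!
Replace every variable `i` of positive degree `dᵢ` by `dᵢ` clones and take `L` copies of every
constraint, copy `t` reading clone `t mod dᵢ` of `i`. When every `dᵢ` divides `L`, each clone
lies in exactly `(L / dᵢ) · dᵢ = L` constraints, so the new instance is regular; `L = m!` works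
since every degree is at most the number `m` of constraints. An assignment of `F` copied to all
clones keeps its value, which gives (a). Conversely, the value of any assignment of the new
instance is the average, over the copies `t`, of the value of the assignment of `F` read off
copy `t`, and some copy is at least as good as the average, which gives (b).
-/

open Finset

lemma Fin.card_filter_val_mod_eq {L d s : ℕ} (hdL : d ∣ L) (hs : s < d) :
    #{t : Fin L | (t : ℕ) % d = s} = L / d := by
  have hd : 0 < d := Nat.zero_lt_of_lt hs
  have hcount := Nat.count_modEq_card L hd s
  simp only [Nat.ModEq, Nat.mod_eq_of_lt hs] at hcount
  rw [card_filter, Fin.sum_univ_eq_sum_range (fun t => if t % d = s then 1 else 0), ← card_filter,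
    ← Nat.count_eq_card_filter_range, hcount, Nat.mod_eq_zero_of_dvd hdL]
  simp

namespace CSPInstance

variable {q n : ℕ}

section Basic

variable (F : CSPInstance q n)

lemma m_pos : 0 < F.m := by
  refine Nat.pos_of_ne_zero fun h => ?_
  have : IsEmpty (Fin F.m) := h ▸ Fin.isEmpty'
  simpa using F.w_sum

lemma degree_le_m (i : Fin n) : F.degree i ≤ F.m :=
  (card_filter_le _ _).trans_eq (card_fin _)

lemma degree_scope_pos (r : Fin F.m) (j : Fin (F.ar r)) : 0 < F.degree (F.scope r j) :=
  card_pos.2 ⟨r, by simp⟩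

lemma optMin_le_optMin {n' : ℕ} [Nonempty (Fin n → Fin q)] (G : CSPInstance q n')
    (h : ∀ χ, ∃ ζ, G.val ζ ≤ F.val χ) : G.optMin ≤ F.optMin :=
  ciInf_mono_of_forall_exists (Set.finite_range _).bddBelow h

end Basic

section Regularize

variable (F : CSPInstance q n) (L : ℕ)

noncomputable def clone (i : Fin n) (hi : 0 < F.degree i) (t : ℕ) : Fin (∑ i, F.degree i) :=
  finSigmaFinEquiv ⟨i, ⟨t % F.degree i, Nat.mod_lt _ hi⟩⟩

lemma clone_eq_finSigmaFinEquiv_iff {i i' : Fin n} (hi' : 0 < F.degree i') (t : ℕ)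
    (s : Fin (F.degree i)) :
    F.clone i' hi' t = finSigmaFinEquiv ⟨i, s⟩ ↔ i' = i ∧ t % F.degree i = s := by
  rw [clone, finSigmaFinEquiv.apply_eq_iff_eq, Sigma.mk.inj_iff]
  constructor
  · rintro ⟨rfl, h⟩
    exact ⟨rfl, congrArg Fin.val (eq_of_heq h)⟩
  · rintro ⟨rfl, h⟩
    exact ⟨rfl, heq_of_eq (Fin.ext h)⟩

/-- Constraint `(t, r)` is copy `t` of constraint `r` of `F`, read on the clones `t mod dᵢ`. -/
noncomputable def regularize (hL : 0 < L) : CSPInstance q (∑ i, F.degree i) where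
  m := L * F.m
  ar r := F.ar (finProdFinEquiv.symm r).2
  pred r := F.pred (finProdFinEquiv.symm r).2
  scope r j := F.clone _ (F.degree_scope_pos _ j) (finProdFinEquiv.symm r).1
  scope_inj r _ _ h := F.scope_inj _ (congrArg Sigma.fst (finSigmaFinEquiv.injective h))
  w _ := 1 / ((L * F.m : ℕ) : ℝ)
  w_nonneg _ := by positivity
  w_sum := by
    have : ((L * F.m : ℕ) : ℝ) ≠ 0 := by exact_mod_cast (Nat.mul_pos hL F.m_pos).ne'
    rw [sum_const, card_univ, Fintype.card_fin, nsmul_eq_mul, mul_one_div_cancel this]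

/-- Variables of degree `0` have no clones; they keep their value under `χ₀`. -/
noncomputable def copyAssignment (χ₀ : Fin n → Fin q) (ζ : Fin (∑ i, F.degree i) → Fin q)
    (t : ℕ) : Fin n → Fin q :=
  fun i => if hi : 0 < F.degree i then ζ (F.clone i hi t) else χ₀ i

variable {L} (hL : 0 < L)

lemma sum_val_copyAssignment (hF : F.Unweighted) (χ₀ : Fin n → Fin q)
    (ζ : Fin (∑ i, F.degree i) → Fin q) :
    ∑ t : Fin L, F.val (F.copyAssignment χ₀ ζ t) = L * (F.regularize L hL).val ζ := by
  have hm : (F.m : ℝ) ≠ 0 := by exact_mod_cast F.m_pos.ne'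
  have hL' : (L : ℝ) ≠ 0 := by exact_mod_cast hL.ne'
  have hG : (F.regularize L hL).val ζ = ∑ p : Fin L × Fin F.m, F.w p.2 / L *
      (if F.pred p.2 (fun j => F.copyAssignment χ₀ ζ p.1 (F.scope p.2 j)) then 1 else 0) :=
    Fintype.sum_equiv finProdFinEquiv.symm _ _ fun r => by
      simp only [regularize, copyAssignment, dif_pos (F.degree_scope_pos _ _)]
      rw [hF]
      push_cast
      congr 1
      ring
  rw [hG, Fintype.sum_prod_type, mul_sum]
  refine sum_congr rfl fun t _ => ?_
  rw [val, mul_sum]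
  refine sum_congr rfl fun r _ => ?_
  field_simp

lemma copyAssignment_comp_fst (χ : Fin n → Fin q) (t : ℕ) :
    F.copyAssignment χ (fun v => χ (finSigmaFinEquiv.symm v).1) t = χ := by
  funext i
  unfold copyAssignment clone
  split_ifs <;> simp

lemma val_regularize_comp_fst (hF : F.Unweighted) (χ : Fin n → Fin q) :
    (F.regularize L hL).val (fun v => χ (finSigmaFinEquiv.symm v).1) = F.val χ := by
  have h := F.sum_val_copyAssignment hL hF χ (fun v => χ (finSigmaFinEquiv.symm v).1)
  simp only [copyAssignment_comp_fst, sum_const, card_univ, Fintype.card_fin,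
    nsmul_eq_mul] at h
  exact (mul_left_cancel₀ (by exact_mod_cast hL.ne') h).symm

lemma exists_val_copyAssignment_le (hF : F.Unweighted) (χ₀ : Fin n → Fin q)
    (ζ : Fin (∑ i, F.degree i) → Fin q) :
    ∃ t : Fin L, F.val (F.copyAssignment χ₀ ζ t) ≤ (F.regularize L hL).val ζ := by
  obtain ⟨t, -, ht⟩ := exists_le_of_sum_le (univ_nonempty_iff.2 ⟨⟨0, hL⟩⟩)
    (f := fun t : Fin L => F.val (F.copyAssignment χ₀ ζ t))
    (g := fun _ => (F.regularize L hL).val ζ)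
    (by simp [F.sum_val_copyAssignment hL hF])
  exact ⟨t, ht⟩

lemma degree_regularize (hdvd : ∀ i, 0 < F.degree i → F.degree i ∣ L)
    (v : Fin (∑ i, F.degree i)) : (F.regularize L hL).degree v = L := by
  obtain ⟨⟨i, s⟩, rfl⟩ := finSigmaFinEquiv.surjective v
  have hi : 0 < F.degree i := s.pos
  calc (F.regularize L hL).degree (finSigmaFinEquiv ⟨i, s⟩)
      = #(({t : Fin L | (t : ℕ) % F.degree i = s} : Finset _) ×ˢ
          ({r : Fin F.m | ∃ j, F.scope r j = i} : Finset _)) := by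
        refine card_equiv finProdFinEquiv.symm fun r => ?_
        rw [mem_filter_univ, mem_product, mem_filter_univ, mem_filter_univ]
        simp only [regularize, clone_eq_finSigmaFinEquiv_iff]
        exact exists_and_right.trans and_comm
    _ = L / F.degree i * F.degree i := by
        rw [card_product, Fin.card_filter_val_mod_eq (hdvd i hi) s.isLt]
        rfl
    _ = L := Nat.div_mul_cancel (hdvd i hi)

end Regularize

end CSPInstance

theorem regularization_min_general {q n : ℕ} (hq : 0 < q)
    (Λ : Set ((k : ℕ) × ((Fin k → Fin q) → Bool)))
    (F : CSPInstance q n) (hF : F.InstanceOf Λ) (hFunw : F.Unweighted)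
    (ε : ℝ) (hε : 0 < ε) :
    ∃ (n' : ℕ) (G : CSPInstance q n'),
      G.InstanceOf Λ ∧ G.Unweighted ∧ G.Regular ∧
      G.optMin ≤ F.optMin ∧
      ∀ ζ : Fin n' → Fin q, ∃ χ : Fin n → Fin q,
        F.val χ ≤ G.val ζ + ε := by
  let χ₀ : Fin n → Fin q := fun _ => ⟨0, hq⟩
  have hL : 0 < F.m.factorial := Nat.factorial_pos _
  refine ⟨_, F.regularize _ hL, fun _ => hF _, fun _ => rfl,
    ⟨_, F.degree_regularize hL fun i hi => Nat.dvd_factorial hi (F.degree_le_m i)⟩, ?_,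
    fun ζ => ?_⟩
  · have : Nonempty (Fin n → Fin q) := ⟨χ₀⟩
    exact F.optMin_le_optMin _ fun χ => ⟨_, (F.val_regularize_comp_fst hL hFunw χ).le⟩
  · obtain ⟨t, ht⟩ := F.exists_val_copyAssignment_le hL hFunw χ₀ ζ
    exact ⟨_, ht.trans (le_add_of_nonneg_right hε.le)⟩

/-- For every unweighted instance `F` of a Min-CSP `Λ` and every `ε > 0`,
there exists a regular unweighted instance `G` of the same Min-CSP `Λ` such that
(a) `Opt(F) ≥ Opt(G)`, and (b) for every assignment `ζ` of `G` there is an assignment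
`χ` of `F` with `Val_χ(F) ≤ Val_ζ(G) + ε`. -/
theorem regularization_min {q n : ℕ} (hq : 0 < q)
    (Λ : Set ((k : ℕ) × ((Fin k → Fin q) → Bool))) (hΛfin : Λ.Finite)
    (F : CSPInstance q n) (hF : F.InstanceOf Λ) (hFunw : F.Unweighted)
    (ε : ℝ) (hε : 0 < ε) :
    ∃ (n' : ℕ) (G : CSPInstance q n'),
      G.InstanceOf Λ ∧ G.Unweighted ∧ G.Regular ∧
      G.optMin ≤ F.optMin ∧
      ∀ ζ : Fin n' → Fin q, ∃ χ : Fin n → Fin q,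
        F.val χ ≤ G.val ζ + ε :=
  regularization_min_general hq Λ F hF hFunw ε hε
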